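/- arXiv:2408.13261 — 5 statements merged into one kernel-verified Lean document; each statement's English description precedes it below -/
import Mathlib

section
/- Let q ∈ (0,1), let A, B be reals with −1 ≤ B < A ≤ 1, let α ≥ 0 be real, and let m > l ≥ 0 be integers. Let f(z) = z − ∑_{k≥2} a_k z^k with all a_k ≥ 0 real, analytic on the open unit disk E, and suppose ∑_{k≥2} μ(k)·a_k ≤ A − B, where μ(k) = (1 + α(1 + |B|))·(([m+1]_q)_{k−1} − ([l+1]_q)_{k−1}) + |B·([m+1]_q)_{k−1} − A·([l+1]_q)_{k−1}|. Then for every z ∈ E, |z| − ((A − B)/μ(2))·|z|² ≤ |f(z)| ≤ |z| + ((A − B)/μ(2))·|z|², where μ(2) = (1 + α(1 + |B|))·([m+1]_q − [l+1]_q) + |B·[m+1]_q − A·[l+1]_q|. -/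
/-- The q-number `[x]_q = (1 - q^x)/(1 - q)` for a real exponent `x`. -/
noncomputable def qNum (q x : ℝ) : ℝ := (1 - q ^ x) / (1 - q)

/-- The q-Pochhammer symbol `([x]_q)_n = ∏_{j=0}^{n-1} [x+j]_q`. -/
noncomputable def qPoch (q x : ℝ) (n : ℕ) : ℝ := ∏ j ∈ Finset.range n, qNum q (x + j)

/-- The q-factorial `[n]_q! = ∏_{j=1}^{n} [j]_q`. -/
noncomputable def qFact (q : ℝ) (n : ℕ) : ℝ := ∏ j ∈ Finset.range n, qNum q (j + 1)

/-- `μ(k) = (1 + α(1+|B|)) (([m+1]_q)_{k-1} - ([l+1]_q)_{k-1})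
      + |B ([m+1]_q)_{k-1} - A ([l+1]_q)_{k-1}|`. -/
noncomputable def mu (q A B α : ℝ) (m l : ℕ) (k : ℕ) : ℝ :=
  (1 + α * (1 + |B|)) * (qPoch q ((m : ℝ) + 1) (k - 1) - qPoch q ((l : ℝ) + 1) (k - 1)) +
    |B * qPoch q ((m : ℝ) + 1) (k - 1) - A * qPoch q ((l : ℝ) + 1) (k - 1)|

/-- The q-Ruscheweyh derivative of order `m` of `z + ∑_{k ≥ 2} c_k z^k`:
`D_q^m f (z) = z + ∑_{k ≥ 2} (([m+1]_q)_{k-1} / [k-1]_q!) c_k z^k`. -/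
noncomputable def DqRus (q : ℝ) (m : ℕ) (c : ℕ → ℂ) (z : ℂ) : ℂ :=
  z + ∑' k : ℕ, ((qPoch q ((m : ℝ) + 1) (k + 1) / qFact q (k + 1) : ℝ) : ℂ) * c (k + 2) * z ^ (k + 2)

lemma qNum_ge_one {q : ℝ} (hq : q ∈ Set.Ioo (0:ℝ) 1) {x : ℝ} (hx : 1 ≤ x) : 1 ≤ qNum q x := by
  have h1 : (0:ℝ) < 1 - q := by linarith [hq.2]
  have h2 : q ^ x ≤ q ^ (1:ℝ) := Real.rpow_le_rpow_of_exponent_ge hq.1 hq.2.le hx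
  rw [Real.rpow_one] at h2
  rw [qNum, le_div_iff₀ h1]
  linarith

lemma qNum_mono {q : ℝ} (hq : q ∈ Set.Ioo (0:ℝ) 1) {x y : ℝ} (hxy : x ≤ y) :
    qNum q x ≤ qNum q y := by
  have h1 : (0:ℝ) < 1 - q := by linarith [hq.2]
  have h2 : q ^ y ≤ q ^ x := Real.rpow_le_rpow_of_exponent_ge hq.1 hq.2.le hxy
  rw [qNum, qNum, div_le_div_iff₀ h1 h1]
  nlinarith

lemma qNum_strict {q : ℝ} (hq : q ∈ Set.Ioo (0:ℝ) 1) {x y : ℝ} (hxy : x < y) :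
    qNum q x < qNum q y := by
  have h1 : (0:ℝ) < 1 - q := by linarith [hq.2]
  have h2 : q ^ y < q ^ x := Real.rpow_lt_rpow_of_exponent_gt hq.1 hq.2 hxy
  rw [qNum, qNum, div_lt_div_iff₀ h1 h1]
  nlinarith

lemma qPoch_one (q x : ℝ) : qPoch q x 1 = qNum q x := by
  simp [qPoch]

lemma qPoch_succ (q x : ℝ) (n : ℕ) :
    qPoch q x (n+1) = (∏ j ∈ Finset.range n, qNum q (x + (j+1))) * qNum q x := by
  rw [qPoch, Finset.prod_range_succ']
  push_cast
  simp

lemma mu_ge (q A B α : ℝ) (hq : q ∈ Set.Ioo (0:ℝ) 1)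
    (hB : -1 ≤ B) (hBA : B < A) (hA : A ≤ 1) (hα : 0 ≤ α)
    (m l : ℕ) (hml : l < m) (k : ℕ) :
    mu q A B α m l 2 ≤ mu q A B α m l (k+2) := by
  have hBle : |B| ≤ 1 := abs_le.mpr ⟨hB, by linarith⟩
  have hl0 : (0:ℝ) ≤ l := Nat.cast_nonneg l
  have hlm : (l:ℝ) ≤ m := by exact_mod_cast hml.le
  set C := 1 + α * (1 + |B|) with hCdef
  have hC : 1 ≤ C := by nlinarith [abs_nonneg B]
  set pm := qNum q ((m:ℝ)+1) with hpm
  set pl := qNum q ((l:ℝ)+1) with hpl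
  have hpl1 : (1:ℝ) ≤ pl := qNum_ge_one hq (by linarith)
  have hplm : pl ≤ pm := qNum_mono hq (by linarith)
  set r := ∏ j ∈ Finset.range k, qNum q ((m:ℝ)+1 + ((j:ℝ)+1)) with hr
  set s := ∏ j ∈ Finset.range k, qNum q ((l:ℝ)+1 + ((j:ℝ)+1)) with hs
  have hs1 : (1:ℝ) ≤ s := by
    rw [hs]
    calc (1:ℝ) = ∏ _j ∈ Finset.range k, (1:ℝ) := by simp
      _ ≤ ∏ j ∈ Finset.range k, qNum q ((l:ℝ)+1 + ((j:ℝ)+1)) := by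
          refine Finset.prod_le_prod (by intro j _; norm_num) (fun j _ => ?_)
          exact qNum_ge_one hq (by have : (0:ℝ) ≤ j := Nat.cast_nonneg j; linarith)
  have hsr : s ≤ r := by
    apply Finset.prod_le_prod
    · intro j _
      exact le_trans zero_le_one
        (qNum_ge_one hq (by have : (0:ℝ) ≤ j := Nat.cast_nonneg j; linarith))
    · intro j _
      exact qNum_mono hq (by linarith)
  have hmu2 : mu q A B α m l 2 = C * (pm - pl) + |B * pm - A * pl| := by
    show (1 + α * (1 + |B|)) * (qPoch q ((m : ℝ) + 1) 1 - qPoch q ((l : ℝ) + 1) 1) +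
      |B * qPoch q ((m : ℝ) + 1) 1 - A * qPoch q ((l : ℝ) + 1) 1| = _
    rw [qPoch_one, qPoch_one]
  have hmuk : mu q A B α m l (k+2) =
      C * (r * pm - s * pl) + |B * (r * pm) - A * (s * pl)| := by
    show (1 + α * (1 + |B|)) * (qPoch q ((m : ℝ) + 1) (k+1) - qPoch q ((l : ℝ) + 1) (k+1)) +
      |B * qPoch q ((m : ℝ) + 1) (k+1) - A * qPoch q ((l : ℝ) + 1) (k+1)| = _
    rw [qPoch_succ, qPoch_succ]
  rw [hmu2, hmuk]
  set T := |B * pm - A * pl| with hT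
  have hT0 : 0 ≤ T := abs_nonneg _
  have hseq : |B * (s * pm) - A * (s * pl)| = s * T := by
    have e : B * (s * pm) - A * (s * pl) = s * (B * pm - A * pl) := by ring
    rw [hT, e, abs_mul, abs_of_nonneg (by linarith : (0:ℝ) ≤ s)]
  have habs : |B * (s * pm) - A * (s * pl)| - |B * (r * pm) - A * (s * pl)| ≤
      |B| * (pm * (r - s)) := by
    have e : (B * (s * pm) - A * (s * pl)) - (B * (r * pm) - A * (s * pl)) =
        B * (pm * (s - r)) := by ring
    calc |B * (s * pm) - A * (s * pl)| - |B * (r * pm) - A * (s * pl)|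
        ≤ |(B * (s * pm) - A * (s * pl)) - (B * (r * pm) - A * (s * pl))| :=
          abs_sub_abs_le_abs_sub _ _
      _ = |B| * (pm * (r - s)) := by
          rw [e, abs_mul, abs_of_nonpos (by nlinarith : pm * (s - r) ≤ 0)]
          ring
  have key : s * T - |B| * (pm * (r - s)) ≤ |B * (r * pm) - A * (s * pl)| := by
    rw [← hseq]; linarith
  have h1 : 0 ≤ (C - |B|) * (pm * (r - s)) :=
    mul_nonneg (by linarith) (mul_nonneg (by linarith) (by linarith))
  have h2 : 0 ≤ C * ((s - 1) * (pm - pl)) :=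
    mul_nonneg (by linarith) (mul_nonneg (by linarith) (by linarith))
  have h3 : 0 ≤ (s - 1) * T := mul_nonneg (by linarith) hT0
  nlinarith [key]

/-- Theorem 3.1 (growth/distortion theorem for `|f(z)|`). -/
theorem growth_theorem
    (q A B α : ℝ) (hq : q ∈ Set.Ioo (0 : ℝ) 1)
    (hB : -1 ≤ B) (hBA : B < A) (hA : A ≤ 1) (hα : 0 ≤ α)
    (m l : ℕ) (hml : l < m)
    (a : ℕ → ℝ) (ha : ∀ k, 0 ≤ a k) (f : ℂ → ℂ)
    (hanal : AnalyticOnNhd ℂ f {z : ℂ | ‖z‖ < 1})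
    (hconv : ∀ z ∈ {z : ℂ | ‖z‖ < 1},
      Summable (fun k : ℕ => a (k + 2) * ‖z‖ ^ (k + 2)))
    (hfa : ∀ z ∈ {z : ℂ | ‖z‖ < 1},
      f z = z - ∑' k : ℕ, (a (k + 2) : ℂ) * z ^ (k + 2))
    (hsummable : Summable (fun k : ℕ => mu q A B α m l (k + 2) * a (k + 2)))
    (hsum : ∑' k : ℕ, mu q A B α m l (k + 2) * a (k + 2) ≤ A - B) :
    ∀ z ∈ {z : ℂ | ‖z‖ < 1},
      ‖z‖ - (A - B) / mu q A B α m l 2 * ‖z‖ ^ 2 ≤ ‖f z‖ ∧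
      ‖f z‖ ≤ ‖z‖ + (A - B) / mu q A B α m l 2 * ‖z‖ ^ 2 := by
  intro z hz
  simp only [Set.mem_setOf_eq] at hz
  have hl0 : (0:ℝ) ≤ l := Nat.cast_nonneg l
  have hlm : (l:ℝ) < m := by exact_mod_cast hml
  have hmu2pos : 0 < mu q A B α m l 2 := by
    have hlt : qNum q ((l:ℝ)+1) < qNum q ((m:ℝ)+1) := qNum_strict hq (by linarith)
    have hC : 1 ≤ 1 + α * (1 + |B|) := by nlinarith [abs_nonneg B]
    have h2 : mu q A B α m l 2 = (1 + α * (1 + |B|)) *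
        (qNum q ((m:ℝ)+1) - qNum q ((l:ℝ)+1)) +
        |B * qNum q ((m:ℝ)+1) - A * qNum q ((l:ℝ)+1)| := by
      show (1 + α * (1 + |B|)) * (qPoch q ((m : ℝ) + 1) 1 - qPoch q ((l : ℝ) + 1) 1) +
        |B * qPoch q ((m : ℝ) + 1) 1 - A * qPoch q ((l : ℝ) + 1) 1| = _
      rw [qPoch_one, qPoch_one]
    rw [h2]
    have habs := abs_nonneg (B * qNum q ((m:ℝ)+1) - A * qNum q ((l:ℝ)+1))
    nlinarith
  have hmuk : ∀ k : ℕ, mu q A B α m l 2 ≤ mu q A B α m l (k+2) :=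
    fun k => mu_ge q A B α hq hB hBA hA hα m l hml k
  have hsa : Summable (fun k : ℕ => a (k+2)) := by
    refine Summable.of_nonneg_of_le (fun k => ha _) (fun k => ?_)
      (hsummable.div_const (mu q A B α m l 2))
    rw [le_div_iff₀ hmu2pos]
    calc a (k+2) * mu q A B α m l 2 ≤ a (k+2) * mu q A B α m l (k+2) :=
          mul_le_mul_of_nonneg_left (hmuk k) (ha _)
      _ = mu q A B α m l (k+2) * a (k+2) := mul_comm _ _
  have htsum : ∑' k : ℕ, a (k+2) ≤ (A - B) / mu q A B α m l 2 := by
    rw [le_div_iff₀ hmu2pos]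
    calc (∑' k : ℕ, a (k+2)) * mu q A B α m l 2
        = ∑' k : ℕ, a (k+2) * mu q A B α m l 2 := tsum_mul_right.symm
      _ ≤ ∑' k : ℕ, mu q A B α m l (k+2) * a (k+2) := by
          refine Summable.tsum_le_tsum (fun k => ?_) (hsa.mul_right _) hsummable
          calc a (k+2) * mu q A B α m l 2 ≤ a (k+2) * mu q A B α m l (k+2) :=
                mul_le_mul_of_nonneg_left (hmuk k) (ha _)
            _ = mu q A B α m l (k+2) * a (k+2) := mul_comm _ _
      _ ≤ A - B := hsum
  have hnormeq : (fun k : ℕ => ‖(a (k+2) : ℂ) * z ^ (k+2)‖) =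
      fun k : ℕ => a (k+2) * ‖z‖ ^ (k+2) := by
    funext k
    rw [norm_mul, norm_pow, Complex.norm_real, Real.norm_eq_abs, abs_of_nonneg (ha _)]
  have hnorms : Summable (fun k : ℕ => ‖(a (k+2) : ℂ) * z ^ (k+2)‖) := by
    rw [hnormeq]; exact hconv z hz
  have hSle : ‖∑' k : ℕ, (a (k+2) : ℂ) * z ^ (k+2)‖ ≤
      (A - B) / mu q A B α m l 2 * ‖z‖ ^ 2 := by
    calc ‖∑' k : ℕ, (a (k+2) : ℂ) * z ^ (k+2)‖
        ≤ ∑' k : ℕ, ‖(a (k+2) : ℂ) * z ^ (k+2)‖ := norm_tsum_le_tsum_norm hnorms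
      _ = ∑' k : ℕ, a (k+2) * ‖z‖ ^ (k+2) := by rw [hnormeq]
      _ ≤ ∑' k : ℕ, a (k+2) * ‖z‖ ^ 2 := by
          refine Summable.tsum_le_tsum (fun k => ?_) (hconv z hz) (hsa.mul_right _)
          exact mul_le_mul_of_nonneg_left
            (pow_le_pow_of_le_one (norm_nonneg z) hz.le (by omega)) (ha _)
      _ = (∑' k : ℕ, a (k+2)) * ‖z‖ ^ 2 := tsum_mul_right
      _ ≤ (A - B) / mu q A B α m l 2 * ‖z‖ ^ 2 :=
          mul_le_mul_of_nonneg_right htsum (by positivity)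
  rw [hfa z hz]
  refine ⟨?_, ?_⟩
  · have h := norm_sub_norm_le z (∑' k : ℕ, (a (k+2) : ℂ) * z ^ (k+2))
    linarith
  · have h := norm_sub_le z (∑' k : ℕ, (a (k+2) : ℂ) * z ^ (k+2))
    linarith
end

section
/- Let q ∈ (0,1), let A, B be reals with −1 ≤ B < A ≤ 1, let α ≥ 0 be real, and let m > l ≥ 0 be integers. Let f(z) = z − ∑_{k≥2} a_k z^k with all a_k ≥ 0 real, analytic on the open unit disk E, and suppose ∑_{k≥2} μ(k)·a_k ≤ A − B, where μ(k) = (1 + α(1 + |B|))·(([m+1]_q)_{k−1} − ([l+1]_q)_{k−1}) + |B·([m+1]_q)_{k−1} − A·([l+1]_q)_{k−1}|. Let 0 ≤ ψ < 1. If z ∈ E, z ≠ 0, and for every k ≥ 2 one has |z|^{k−1} ≤ (1 − ψ)·μ(k)/((k − ψ)·(A − B)), then f(z) ≠ 0 and |z·f′(z)/f(z) − 1| ≤ 1 − ψ (so f is starlike of order ψ at such points). -/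
lemma aux_summable_geo {x : ℝ} (hx0 : 0 ≤ x) (hx1 : x < 1) :
    Summable (fun k : ℕ => ((k : ℝ) + 2) * x ^ (k + 1)) := by
  have h1 : Summable (fun n : ℕ => (n : ℝ) ^ 1 * x ^ n) :=
    summable_pow_mul_geometric_of_norm_lt_one 1 (by rwa [Real.norm_eq_abs, abs_of_nonneg hx0])
  have h2 : Summable (fun n : ℕ => x ^ n) := summable_geometric_of_lt_one hx0 hx1
  have h3 : Summable (fun k : ℕ => ((k : ℝ) + 1) * x ^ (k + 1)) := by
    have := (h1.comp_injective Nat.succ_injective)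
    refine this.congr fun k => ?_
    show ((k + 1 : ℕ) : ℝ) ^ 1 * x ^ (k + 1) = ((k : ℝ) + 1) * x ^ (k + 1)
    push_cast; ring
  have h4 : Summable (fun k : ℕ => x ^ (k + 1)) := by
    have := (h2.comp_injective Nat.succ_injective)
    exact this.congr fun k => rfl
  refine (h3.add h4).congr fun k => ?_
  ring


/-- Theorem 4.1 (i): radius of starlikeness of order `ψ`. -/
theorem radius_of_starlikeness
    (q A B α : ℝ) (hq : q ∈ Set.Ioo (0 : ℝ) 1)
    (hB : -1 ≤ B) (hBA : B < A) (hA : A ≤ 1) (hα : 0 ≤ α)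
    (m l : ℕ) (hml : l < m)
    (a : ℕ → ℝ) (ha : ∀ k, 0 ≤ a k) (f : ℂ → ℂ)
    (hanal : AnalyticOnNhd ℂ f {z : ℂ | ‖z‖ < 1})
    (hconv : ∀ z ∈ {z : ℂ | ‖z‖ < 1},
      Summable (fun k : ℕ => a (k + 2) * ‖z‖ ^ (k + 2)))
    (hfa : ∀ z ∈ {z : ℂ | ‖z‖ < 1},
      f z = z - ∑' k : ℕ, (a (k + 2) : ℂ) * z ^ (k + 2))
    (hsummable : Summable (fun k : ℕ => mu q A B α m l (k + 2) * a (k + 2)))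
    (hsum : ∑' k : ℕ, mu q A B α m l (k + 2) * a (k + 2) ≤ A - B)
    (ψ : ℝ) (hψ0 : 0 ≤ ψ) (hψ1 : ψ < 1)
    (z : ℂ) (hz : ‖z‖ < 1) (hz0 : z ≠ 0)
    (hrad : ∀ k : ℕ, 2 ≤ k →
      ‖z‖ ^ (k - 1) ≤ (1 - ψ) * mu q A B α m l k / (((k : ℝ) - ψ) * (A - B))) :
    f z ≠ 0 ∧ ‖z * deriv f z / f z - 1‖ ≤ 1 - ψ := by
  have hR0 : (0:ℝ) < ‖z‖ := norm_pos_iff.mpr hz0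
  set R := ‖z‖ with hRdef
  have hAB : (0:ℝ) < A - B := sub_pos.mpr hBA
  have hψ : (0:ℝ) < 1 - ψ := sub_pos.mpr hψ1
  -- key termwise inequality
  have key : ∀ k : ℕ, ((k:ℝ) + 2 - ψ) * a (k+2) * R ^ (k+1)
      ≤ (1 - ψ)/(A - B) * (mu q A B α m l (k+2) * a (k+2)) := by
    intro k
    have h1 := hrad (k+2) (by omega)
    have h2 : (k+2 : ℕ) - 1 = k+1 := by omega
    rw [h2] at h1
    have hcast : ((k+2 : ℕ) : ℝ) = (k:ℝ) + 2 := by push_cast; ring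
    rw [hcast] at h1
    have hk : (0:ℝ) < (k:ℝ) + 2 - ψ := by
      have : (0:ℝ) ≤ (k:ℝ) := Nat.cast_nonneg k
      linarith
    have h3 := mul_le_mul_of_nonneg_left h1 (mul_nonneg hk.le (ha (k+2)))
    calc ((k:ℝ) + 2 - ψ) * a (k+2) * R ^ (k+1)
        = (((k:ℝ)+2-ψ) * a (k+2)) * R^(k+1) := by ring
      _ ≤ (((k:ℝ)+2-ψ) * a (k+2)) * ((1-ψ) * mu q A B α m l (k+2) / (((k:ℝ)+2-ψ)*(A-B))) := h3
      _ = (1-ψ)/(A-B) * (mu q A B α m l (k+2) * a (k+2)) := by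
          field_simp
  have keynn : ∀ k : ℕ, 0 ≤ ((k:ℝ)+2-ψ) * a (k+2) * R^(k+1) := by
    intro k
    have h0 : (0:ℝ) ≤ (k:ℝ) := Nat.cast_nonneg k
    have : (0:ℝ) ≤ (k:ℝ) + 2 - ψ := by linarith
    exact mul_nonneg (mul_nonneg this (ha _)) (pow_nonneg hR0.le _)
  have hμsum := hsummable.mul_left ((1-ψ)/(A-B))
  have hS : Summable (fun k : ℕ => ((k:ℝ)+2-ψ) * a (k+2) * R^(k+1)) :=
    Summable.of_nonneg_of_le keynn key hμsum
  have hSle : ∑' k : ℕ, ((k:ℝ)+2-ψ) * a (k+2) * R^(k+1) ≤ 1 - ψ := by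
    calc ∑' k : ℕ, ((k:ℝ)+2-ψ) * a (k+2) * R^(k+1)
        ≤ ∑' k : ℕ, (1-ψ)/(A-B) * (mu q A B α m l (k+2) * a (k+2)) :=
          Summable.tsum_le_tsum key hS hμsum
      _ = (1-ψ)/(A-B) * ∑' k : ℕ, mu q A B α m l (k+2) * a (k+2) := tsum_mul_left
      _ ≤ (1-ψ)/(A-B) * (A-B) := by
          apply mul_le_mul_of_nonneg_left hsum; positivity
      _ = 1-ψ := by field_simp
  -- auxiliary real summabilities
  have hT : Summable (fun k : ℕ => a (k+2) * R^(k+1)) := by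
    refine hS.of_nonneg_of_le (fun k => mul_nonneg (ha _) (pow_nonneg hR0.le _)) fun k => ?_
    have h0 : (0:ℝ) ≤ (k:ℝ) := Nat.cast_nonneg k
    have hp : 0 ≤ a (k+2) * R^(k+1) := mul_nonneg (ha _) (pow_nonneg hR0.le _)
    nlinarith
  have hN : Summable (fun k : ℕ => ((k:ℝ)+1) * a (k+2) * R^(k+1)) := by
    refine hS.of_nonneg_of_le (fun k => ?_) fun k => ?_
    · have h0 : (0:ℝ) ≤ (k:ℝ) := Nat.cast_nonneg k
      exact mul_nonneg (mul_nonneg (by linarith) (ha _)) (pow_nonneg hR0.le _)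
    · have hp : 0 ≤ a (k+2) * R^(k+1) := mul_nonneg (ha _) (pow_nonneg hR0.le _)
      nlinarith
  set T := ∑' k : ℕ, a (k+2) * R^(k+1) with hTdef
  set N := ∑' k : ℕ, ((k:ℝ)+1) * a (k+2) * R^(k+1) with hNdef
  have hT0 : 0 ≤ T := tsum_nonneg fun k => mul_nonneg (ha _) (pow_nonneg hR0.le _)
  have hN0 : 0 ≤ N := tsum_nonneg fun k => by
    have h0 : (0:ℝ) ≤ (k:ℝ) := Nat.cast_nonneg k
    exact mul_nonneg (mul_nonneg (by linarith) (ha _)) (pow_nonneg hR0.le _)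
  have hsplit : ∑' k : ℕ, ((k:ℝ)+2-ψ) * a (k+2) * R^(k+1) = N + (1-ψ) * T := by
    have e : ∀ k : ℕ, ((k:ℝ)+2-ψ) * a (k+2) * R^(k+1)
        = ((k:ℝ)+1) * a (k+2) * R^(k+1) + (1-ψ) * (a (k+2) * R^(k+1)) := fun k => by ring
    rw [tsum_congr e, Summable.tsum_add hN (hT.mul_left (1-ψ)), tsum_mul_left]
  have hNT : N + (1-ψ) * T ≤ 1 - ψ := hsplit ▸ hSle
  have hT1 : T < 1 := by
    have h2T : (2-ψ) * T ≤ 1 - ψ := by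
      rw [hTdef, ← tsum_mul_left]
      calc ∑' k : ℕ, (2-ψ) * (a (k+2) * R^(k+1))
          ≤ ∑' k : ℕ, ((k:ℝ)+2-ψ) * a (k+2) * R^(k+1) := by
            refine Summable.tsum_le_tsum (fun k => ?_) (hT.mul_left _) hS
            have h0 : (0:ℝ) ≤ (k:ℝ) := Nat.cast_nonneg k
            have hp : 0 ≤ a (k+2) * R^(k+1) := mul_nonneg (ha _) (pow_nonneg hR0.le _)
            nlinarith
        _ ≤ 1 - ψ := hSle
    nlinarith
  have hNle : N ≤ (1-ψ) * (1-T) := by nlinarith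
  -- the series function and its derivative
  have hopen : IsOpen {w : ℂ | ‖w‖ < 1} := isOpen_lt continuous_norm continuous_const
  set r : ℝ := (R+1)/2 with hrdef
  set r' : ℝ := (R+3)/4 with hr'def
  have hRr : R < r := by rw [hrdef]; linarith
  have hrr' : r < r' := by rw [hrdef, hr'def]; linarith
  have hr'1 : r' < 1 := by rw [hr'def]; linarith
  have hr0 : 0 < r := by rw [hrdef]; linarith
  have hr'0 : 0 < r' := by rw [hr'def]; linarith
  clear hrdef hr'def
  clear_value r r'
  have hc : Summable (fun k : ℕ => a (k+2) * r'^(k+2)) := by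
    have hmem : (r' : ℂ) ∈ {w : ℂ | ‖w‖ < 1} := by
      simp only [Set.mem_setOf_eq, Complex.norm_real, Real.norm_eq_abs, abs_of_nonneg hr'0.le]
      exact hr'1
    have := hconv (r' : ℂ) hmem
    refine this.congr fun k => ?_
    rw [Complex.norm_real, Real.norm_eq_abs, abs_of_nonneg hr'0.le]
  obtain ⟨C, hC⟩ : ∃ C, ∀ k : ℕ, a (k+2) * r'^(k+2) ≤ C := by
    have := hc.tendsto_atTop_zero.bddAbove_range
    obtain ⟨C, hC⟩ := this
    exact ⟨C, fun k => hC (Set.mem_range_self k)⟩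
  have hu : Summable (fun k : ℕ => ((k:ℝ)+2) * a (k+2) * r^(k+1)) := by
    have hx0 : 0 ≤ r / r' := by positivity
    have hx1 : r / r' < 1 := (div_lt_one hr'0).mpr hrr'
    refine ((aux_summable_geo hx0 hx1).mul_left (C / r')).of_nonneg_of_le (fun k => ?_) fun k => ?_
    · have h0 : (0:ℝ) ≤ (k:ℝ) := Nat.cast_nonneg k
      exact mul_nonneg (mul_nonneg (by linarith) (ha _)) (pow_nonneg hr0.le _)
    · have h0 : (0:ℝ) ≤ (k:ℝ) := Nat.cast_nonneg k
      have hC' := hC k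
      have e : ((k:ℝ)+2) * a (k+2) * r^(k+1)
          = (a (k+2) * r'^(k+2)) * (((k:ℝ)+2) * (r/r')^(k+1)) / r' := by
        rw [div_pow]
        field_simp
        ring
      rw [e]
      have hpos : 0 ≤ ((k:ℝ)+2) * (r/r')^(k+1) := by positivity
      calc (a (k+2) * r'^(k+2)) * (((k:ℝ)+2) * (r/r')^(k+1)) / r'
          ≤ C * (((k:ℝ)+2) * (r/r')^(k+1)) / r' := by gcongr
        _ = C / r' * (((k:ℝ)+2) * (r/r')^(k+1)) := by ring
  -- the series and its term-by-term derivative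
  set g : ℕ → ℂ → ℂ := fun k w => (a (k+2) : ℂ) * w ^ (k+2) with hgdef
  set g' : ℕ → ℂ → ℂ := fun k w => (a (k+2) : ℂ) * (((k:ℂ)+2) * w ^ (k+1)) with hg'def
  have hgder : ∀ k (w : ℂ), w ∈ Metric.ball (0:ℂ) r → HasDerivAt (g k) (g' k w) w := by
    intro k w _
    have h := (hasDerivAt_pow (k+2) w).const_mul ((a (k+2) : ℂ))
    have e : ((k+2 : ℕ) : ℂ) * w ^ (k + 2 - 1) = ((k:ℂ)+2) * w^(k+1) := by
      push_cast; ring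
    rw [e] at h
    simpa [hgdef, hg'def] using h
  have hnormeq : ∀ (k : ℕ) (w : ℂ), ‖g' k w‖ = ((k:ℝ)+2) * a (k+2) * ‖w‖^(k+1) := by
    intro k w
    have e : ((k:ℂ)+2) = (((k:ℝ)+2 : ℝ) : ℂ) := by push_cast; ring
    simp only [hg'def, e, norm_mul, norm_pow, Complex.norm_real, Real.norm_eq_abs,
      abs_of_nonneg (ha (k+2)), abs_of_nonneg (by positivity : (0:ℝ) ≤ (k:ℝ)+2)]
    ring
  have hgbd : ∀ k (w : ℂ), w ∈ Metric.ball (0:ℂ) r →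
      ‖g' k w‖ ≤ ((k:ℝ)+2) * a (k+2) * r^(k+1) := by
    intro k w hw
    rw [mem_ball_zero_iff] at hw
    rw [hnormeq]
    have hpow : ‖w‖^(k+1) ≤ r^(k+1) := pow_le_pow_left₀ (norm_nonneg w) hw.le (k+1)
    have hcoef : (0:ℝ) ≤ ((k:ℝ)+2) * a (k+2) := mul_nonneg (by positivity) (ha _)
    calc ((k:ℝ)+2) * a (k+2) * ‖w‖^(k+1) = (((k:ℝ)+2) * a (k+2)) * ‖w‖^(k+1) := by ring
      _ ≤ (((k:ℝ)+2) * a (k+2)) * r^(k+1) := mul_le_mul_of_nonneg_left hpow hcoef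
      _ = ((k:ℝ)+2) * a (k+2) * r^(k+1) := by ring
  have hmemz : z ∈ Metric.ball (0:ℂ) r := by rw [mem_ball_zero_iff]; exact hRr
  have hmem0 : (0:ℂ) ∈ Metric.ball (0:ℂ) r := Metric.mem_ball_self hr0
  have hg0 : Summable (fun k => g k 0) := by
    refine summable_zero.congr fun k => ?_
    simp [hgdef]
  have hder := hasDerivAt_tsum_of_isPreconnected hu Metric.isOpen_ball
    (convex_ball (0:ℂ) r).isPreconnected hgder hgbd hmem0 hg0 hmemz
  set D := ∑' k : ℕ, g' k z with hDdef
  have hfg : f =ᶠ[nhds z] fun w => w - ∑' k : ℕ, g k w := by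
    filter_upwards [hopen.mem_nhds (show z ∈ {w : ℂ | ‖w‖ < 1} from hz)] with w hw
    simpa [hgdef] using hfa w hw
  have hderf : HasDerivAt f (1 - D) z :=
    ((hasDerivAt_id z).sub hder).congr_of_eventuallyEq hfg
  have hdf : deriv f z = 1 - D := hderf.deriv
  -- complex summability and norms
  have hgznorm : ∀ k : ℕ, ‖g k z‖ = (a (k+2) * R^(k+1)) * R := by
    intro k
    simp only [hgdef, norm_mul, norm_pow, Complex.norm_real, Real.norm_eq_abs,
      abs_of_nonneg (ha (k+2))]
    rw [← hRdef, pow_succ]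
    ring
  have hnormg : Summable (fun k => ‖g k z‖) :=
    (hT.mul_right R).congr fun k => (hgznorm k).symm
  have hgz : Summable (fun k => g k z) := hnormg.of_norm
  have hKsum : Summable (fun k : ℕ => ((k:ℝ)+2) * a (k+2) * R^(k+1)) := by
    refine (hN.add hT).congr fun k => ?_; ring
  have hnormg' : Summable (fun k => ‖g' k z‖) := by
    refine hKsum.congr fun k => ?_
    rw [hnormeq, ← hRdef]
  have hg'z : Summable (fun k => g' k z) := hnormg'.of_norm
  have hzg' : Summable (fun k => z * g' k z) := hg'z.mul_left z
  -- numerator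
  have hnum : z * deriv f z - f z = -∑' k : ℕ, ((((k:ℝ)+1) : ℝ) : ℂ) * (a (k+2):ℂ) * z^(k+2) := by
    rw [hdf, hfa z hz]
    have hzD : z * D = ∑' k : ℕ, z * g' k z := by rw [hDdef, tsum_mul_left]
    have hG : ∑' k : ℕ, (a (k + 2) : ℂ) * z ^ (k + 2) = ∑' k : ℕ, g k z := by
      simp [hgdef]
    calc z * (1 - D) - (z - ∑' k : ℕ, (a (k + 2) : ℂ) * z ^ (k + 2))
        = (∑' k : ℕ, g k z) - z * D := by rw [hG]; ring
      _ = ∑' k : ℕ, (g k z - z * g' k z) := by rw [hzD, Summable.tsum_sub hgz hzg']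
      _ = ∑' k : ℕ, -(((((k:ℝ)+1) : ℝ) : ℂ) * (a (k+2):ℂ) * z^(k+2)) := by
          refine tsum_congr fun k => ?_
          simp only [hgdef, hg'def]
          push_cast
          ring
      _ = -∑' k : ℕ, ((((k:ℝ)+1) : ℝ) : ℂ) * (a (k+2):ℂ) * z^(k+2) := tsum_neg
  have hnumterm : ∀ k : ℕ, ‖((((k:ℝ)+1) : ℝ) : ℂ) * (a (k+2):ℂ) * z^(k+2)‖
      = (((k:ℝ)+1) * a (k+2) * R^(k+1)) * R := by
    intro k
    have h0 : (0:ℝ) ≤ (k:ℝ) := Nat.cast_nonneg k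
    simp only [norm_mul, norm_pow, Complex.norm_real, Real.norm_eq_abs,
      abs_of_nonneg (ha (k+2)), abs_of_nonneg (by linarith : (0:ℝ) ≤ (k:ℝ)+1)]
    rw [← hRdef, pow_succ]
    ring
  have hnsum : Summable (fun k : ℕ => ‖((((k:ℝ)+1) : ℝ) : ℂ) * (a (k+2):ℂ) * z^(k+2)‖) :=
    (hN.mul_right R).congr fun k => (hnumterm k).symm
  have hnumnorm : ‖z * deriv f z - f z‖ ≤ N * R := by
    rw [hnum, norm_neg]
    calc ‖∑' k : ℕ, ((((k:ℝ)+1) : ℝ) : ℂ) * (a (k+2):ℂ) * z^(k+2)‖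
        ≤ ∑' k : ℕ, ‖((((k:ℝ)+1) : ℝ) : ℂ) * (a (k+2):ℂ) * z^(k+2)‖ :=
          norm_tsum_le_tsum_norm hnsum
      _ = ∑' k : ℕ, (((k:ℝ)+1) * a (k+2) * R^(k+1)) * R := tsum_congr hnumterm
      _ = N * R := by rw [tsum_mul_right]
  -- denominator
  have hfzlow : R * (1 - T) ≤ ‖f z‖ := by
    rw [hfa z hz]
    have hG : ∑' k : ℕ, (a (k + 2) : ℂ) * z ^ (k + 2) = ∑' k : ℕ, g k z := by
      simp [hgdef]
    rw [hG]
    have hGn : ‖∑' k : ℕ, g k z‖ ≤ T * R := by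
      calc ‖∑' k : ℕ, g k z‖ ≤ ∑' k : ℕ, ‖g k z‖ := norm_tsum_le_tsum_norm hnormg
        _ = ∑' k : ℕ, (a (k+2) * R^(k+1)) * R := tsum_congr hgznorm
        _ = T * R := by rw [tsum_mul_right]
    have hlb := norm_sub_norm_le z (∑' k : ℕ, g k z)
    rw [← hRdef] at hlb
    have he : R * (1-T) = R - T * R := by ring
    linarith
  have hfzpos : 0 < ‖f z‖ := by
    have h1 : (0:ℝ) < R * (1 - T) := mul_pos hR0 (by linarith)
    linarith
  have hfz0 : f z ≠ 0 := by
    intro h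
    rw [h, norm_zero] at hfzpos
    exact lt_irrefl _ hfzpos
  refine ⟨hfz0, ?_⟩
  have hrw : z * deriv f z / f z - 1 = (z * deriv f z - f z) / f z := by
    field_simp
  rw [hrw, norm_div, div_le_iff₀ hfzpos]
  calc ‖z * deriv f z - f z‖ ≤ N * R := hnumnorm
    _ ≤ ((1-ψ) * (1-T)) * R := mul_le_mul_of_nonneg_right hNle hR0.le
    _ = (1-ψ) * (R * (1-T)) := by ring
    _ ≤ (1-ψ) * ‖f z‖ := mul_le_mul_of_nonneg_left hfzlow hψ.le
end

section
/- Let q ∈ (0,1), let A, B be reals with −1 ≤ B < A ≤ 1, let α ≥ 0 be real, and let m > l ≥ 0 be integers. Let f(z) = z − ∑_{k≥2} a_k z^k with all a_k ≥ 0 real, analytic on the open unit disk E, and suppose ∑_{k≥2} μ(k)·a_k ≤ A − B, where μ(k) = (1 + α(1 + |B|))·(([m+1]_q)_{k−1} − ([l+1]_q)_{k−1}) + |B·([m+1]_q)_{k−1} − A·([l+1]_q)_{k−1}|. Let 0 ≤ ψ < 1. If z ∈ E and for every k ≥ 2 one has |z|^{k−1} ≤ (1 − ψ)·μ(k)/(k·(k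 − ψ)·(A − B)), then f′(z) ≠ 0 and |z·f″(z)/f′(z)| ≤ 1 − ψ (so f is convex of order ψ at such points). -/
lemma summable_quad_geom {x : ℝ} (h0 : 0 ≤ x) (h1 : x < 1) :
    Summable (fun k : ℕ => ((k : ℝ) + 2) * ((k : ℝ) + 1) * x ^ k) := by
  have hx : ‖x‖ < 1 := by rwa [Real.norm_eq_abs, abs_of_nonneg h0]
  have h2 := summable_pow_mul_geometric_of_norm_lt_one (R := ℝ) 2 hx
  have h1' := summable_pow_mul_geometric_of_norm_lt_one (R := ℝ) 1 hx
  have h0' := summable_geometric_of_lt_one h0 h1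
  exact (h2.add ((h1'.mul_left 3).add (h0'.mul_left 2))).congr (fun k => by ring)

private lemma quad_div_eq (M r₁ r₂ : ℝ) (h : r₂ ≠ 0) (k : ℕ) :
    ((k : ℝ) + 2) * ((k : ℝ) + 1) * (M / r₂ ^ (k + 2)) * r₁ ^ k
      = M / r₂ ^ 2 * (((k : ℝ) + 2) * ((k : ℝ) + 1) * (r₁ / r₂) ^ k) := by
  rw [div_pow]
  field_simp
  ring

lemma summable_aux (b : ℕ → ℝ) (hb : ∀ k, 0 ≤ b k)
    (hs : ∀ s : ℝ, 0 ≤ s → s < 1 → Summable (fun k : ℕ => b k * s ^ (k + 2)))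
    {r₁ : ℝ} (h0 : 0 ≤ r₁) (h1 : r₁ < 1) :
    Summable (fun k : ℕ => ((k : ℝ) + 2) * ((k : ℝ) + 1) * b k * r₁ ^ k) := by
  obtain ⟨r₂, h12, h21⟩ : ∃ r₂, r₁ < r₂ ∧ r₂ < 1 := ⟨(r₁ + 1) / 2, by linarith, by linarith⟩
  have h20 : 0 < r₂ := lt_of_le_of_lt h0 h12
  have hS := hs r₂ h20.le h21
  set M : ℝ := ∑' k, b k * r₂ ^ (k + 2) with hM
  have hMk : ∀ k, b k * r₂ ^ (k + 2) ≤ M := fun k =>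
    Summable.le_tsum hS k (fun j _ => by have := hb j; positivity)
  have key := (summable_quad_geom (x := r₁ / r₂) (by positivity)
    (by rw [div_lt_one h20]; exact h12)).mul_left (M / r₂ ^ 2)
  apply Summable.of_nonneg_of_le (fun k => by have := hb k; positivity) _ key
  intro k
  have hbk : b k ≤ M / r₂ ^ (k + 2) := by
    rw [le_div_iff₀ (pow_pos h20 _)]; exact hMk k
  calc ((k : ℝ) + 2) * ((k : ℝ) + 1) * b k * r₁ ^ k
      ≤ ((k : ℝ) + 2) * ((k : ℝ) + 1) * (M / r₂ ^ (k + 2)) * r₁ ^ k := by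
        gcongr
    _ = M / r₂ ^ 2 * (((k : ℝ) + 2) * ((k : ℝ) + 1) * (r₁ / r₂) ^ k) :=
        quad_div_eq M r₁ r₂ h20.ne' k


set_option maxHeartbeats 2000000 in
/-- Theorem 4.1 (ii): radius of convexity of order `ψ`. -/
theorem radius_of_convexity
    (q A B α : ℝ) (hq : q ∈ Set.Ioo (0 : ℝ) 1)
    (hB : -1 ≤ B) (hBA : B < A) (hA : A ≤ 1) (hα : 0 ≤ α)
    (m l : ℕ) (hml : l < m)
    (a : ℕ → ℝ) (ha : ∀ k, 0 ≤ a k) (f : ℂ → ℂ)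
    (hanal : AnalyticOnNhd ℂ f {z : ℂ | ‖z‖ < 1})
    (hconv : ∀ z ∈ {z : ℂ | ‖z‖ < 1},
      Summable (fun k : ℕ => a (k + 2) * ‖z‖ ^ (k + 2)))
    (hfa : ∀ z ∈ {z : ℂ | ‖z‖ < 1},
      f z = z - ∑' k : ℕ, (a (k + 2) : ℂ) * z ^ (k + 2))
    (hsummable : Summable (fun k : ℕ => mu q A B α m l (k + 2) * a (k + 2)))
    (hsum : ∑' k : ℕ, mu q A B α m l (k + 2) * a (k + 2) ≤ A - B)
    (ψ : ℝ) (hψ0 : 0 ≤ ψ) (hψ1 : ψ < 1)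
    (z : ℂ) (hz : ‖z‖ < 1)
    (hrad : ∀ k : ℕ, 2 ≤ k →
      ‖z‖ ^ (k - 1) ≤ (1 - ψ) * mu q A B α m l k / ((k : ℝ) * ((k : ℝ) - ψ) * (A - B))) :
    deriv f z ≠ 0 ∧ ‖z * deriv (deriv f) z / deriv f z‖ ≤ 1 - ψ := by
  have hAB : 0 < A - B := sub_pos.mpr hBA
  have hr0 : (0:ℝ) ≤ ‖z‖ := norm_nonneg z
  obtain ⟨r₁, hrr₁, hr₁1⟩ : ∃ r₁, ‖z‖ < r₁ ∧ r₁ < 1 :=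
    ⟨(‖z‖ + 1) / 2, by linarith, by linarith⟩
  have hr₁0 : 0 < r₁ := lt_of_le_of_lt hr0 hrr₁
  have ht_open : IsOpen (Metric.ball (0:ℂ) r₁) := Metric.isOpen_ball
  have ht_conn : IsPreconnected (Metric.ball (0:ℂ) r₁) := (convex_ball (0:ℂ) r₁).isPreconnected
  have hzt : z ∈ Metric.ball (0:ℂ) r₁ := mem_ball_zero_iff.mpr hrr₁
  have h0t : (0:ℂ) ∈ Metric.ball (0:ℂ) r₁ := mem_ball_zero_iff.mpr (by simpa using hr₁0)
  have htE : ∀ y ∈ Metric.ball (0:ℂ) r₁, ‖y‖ < 1 :=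
    fun y hy => lt_trans (mem_ball_zero_iff.mp hy) hr₁1
  -- real summability at radius r₁
  have hs : ∀ s : ℝ, 0 ≤ s → s < 1 → Summable (fun k : ℕ => a (k + 2) * s ^ (k + 2)) := by
    intro s h0 h1
    have hmem : (s : ℂ) ∈ {w : ℂ | ‖w‖ < 1} := by
      simp only [Set.mem_setOf_eq, Complex.norm_real, Real.norm_eq_abs, abs_of_nonneg h0]
      exact h1
    have := hconv (s : ℂ) hmem
    simpa [Complex.norm_real, Real.norm_eq_abs, abs_of_nonneg h0] using this
  have hu2 : Summable (fun k : ℕ => ((k:ℝ)+2) * ((k:ℝ)+1) * a (k+2) * r₁ ^ k) :=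
    summable_aux _ (fun k => ha _) hs hr₁0.le hr₁1
  have hu1 : Summable (fun k : ℕ => ((k:ℝ)+2) * a (k+2) * r₁ ^ (k+1)) := by
    apply Summable.of_nonneg_of_le (fun k => by have := ha (k+2); positivity) _ hu2
    intro k
    have hk0 : (0:ℝ) ≤ (k:ℝ) := Nat.cast_nonneg k
    rw [pow_succ]
    nlinarith [mul_nonneg (mul_nonneg (mul_nonneg (by positivity : (0:ℝ) ≤ (k:ℝ)+2) (ha (k+2)))
      (pow_nonneg hr₁0.le k)) (by linarith : (0:ℝ) ≤ (k:ℝ)+1-r₁)]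
  -- per-term derivatives
  have hder1 : ∀ (n : ℕ) (y : ℂ), HasDerivAt (fun w : ℂ => (a (n+2) : ℂ) * w ^ (n+2))
      ((a (n+2) : ℂ) * ((n+2 : ℕ) : ℂ) * y ^ (n+1)) y := by
    intro n y
    have h := (hasDerivAt_pow (n+2) y).const_mul ((a (n+2) : ℝ) : ℂ)
    refine h.congr_deriv ?_
    push_cast
    ring
  have hbound1 : ∀ (n : ℕ) (y : ℂ), y ∈ Metric.ball (0:ℂ) r₁ →
      ‖(a (n+2) : ℂ) * ((n+2:ℕ):ℂ) * y ^ (n+1)‖ ≤ ((n:ℝ)+2) * a (n+2) * r₁ ^ (n+1) := by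
    intro n y hy
    have hyn : ‖y‖ ≤ r₁ := (mem_ball_zero_iff.mp hy).le
    have hpow : ‖y‖ ^ (n+1) ≤ r₁ ^ (n+1) := pow_le_pow_left₀ (norm_nonneg y) hyn _
    rw [norm_mul, norm_mul, norm_pow, Complex.norm_natCast, Complex.norm_real,
      Real.norm_eq_abs, abs_of_nonneg (ha _)]
    push_cast
    nlinarith [mul_nonneg (mul_nonneg (by positivity : (0:ℝ) ≤ (n:ℝ)+2) (ha (n+2)))
      (sub_nonneg.mpr hpow)]
  have hP : ∀ y ∈ Metric.ball (0:ℂ) r₁,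
      HasDerivAt (fun w : ℂ => ∑' k : ℕ, (a (k+2) : ℂ) * w ^ (k+2))
      (∑' k : ℕ, (a (k+2) : ℂ) * ((k+2:ℕ):ℂ) * y ^ (k+1)) y := by
    intro y hy
    exact hasDerivAt_tsum_of_isPreconnected hu1 ht_open ht_conn
      (fun n w _ => hder1 n w) hbound1 h0t
      (summable_zero.congr (fun n => by simp)) hy
  have hopen1 : IsOpen {w : ℂ | ‖w‖ < 1} := by
    have : {w : ℂ | ‖w‖ < 1} = Metric.ball (0:ℂ) 1 := by
      ext w; simp [mem_ball_zero_iff]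
    rw [this]; exact Metric.isOpen_ball
  have hDf : ∀ y ∈ Metric.ball (0:ℂ) r₁,
      deriv f y = 1 - ∑' k : ℕ, (a (k+2) : ℂ) * ((k+2:ℕ):ℂ) * y ^ (k+1) := by
    intro y hy
    have hy1 : ‖y‖ < 1 := htE y hy
    have hev : f =ᶠ[nhds y] (fun w => w - ∑' k : ℕ, (a (k+2) : ℂ) * w ^ (k+2)) :=
      Filter.eventuallyEq_of_mem (hopen1.mem_nhds hy1) (fun w hw => hfa w hw)
    rw [hev.deriv_eq]
    exact ((hasDerivAt_id y).sub (hP y hy)).deriv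
  have hder2 : ∀ (n : ℕ) (y : ℂ),
      HasDerivAt (fun w : ℂ => (a (n+2) : ℂ) * ((n+2:ℕ):ℂ) * w ^ (n+1))
      ((a (n+2) : ℂ) * ((n+2:ℕ):ℂ) * ((n+1:ℕ):ℂ) * y ^ n) y := by
    intro n y
    have h := (hasDerivAt_pow (n+1) y).const_mul ((a (n+2) : ℂ) * ((n+2:ℕ):ℂ))
    refine h.congr_deriv ?_
    push_cast
    ring
  have hbound2 : ∀ (n : ℕ) (y : ℂ), y ∈ Metric.ball (0:ℂ) r₁ →
      ‖(a (n+2) : ℂ) * ((n+2:ℕ):ℂ) * ((n+1:ℕ):ℂ) * y ^ n‖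
        ≤ ((n:ℝ)+2) * ((n:ℝ)+1) * a (n+2) * r₁ ^ n := by
    intro n y hy
    have hyn : ‖y‖ ≤ r₁ := (mem_ball_zero_iff.mp hy).le
    have hpow : ‖y‖ ^ n ≤ r₁ ^ n := pow_le_pow_left₀ (norm_nonneg y) hyn _
    rw [norm_mul, norm_mul, norm_mul, norm_pow, Complex.norm_natCast, Complex.norm_natCast,
      Complex.norm_real, Real.norm_eq_abs, abs_of_nonneg (ha _)]
    push_cast
    nlinarith [mul_nonneg (mul_nonneg (mul_nonneg
      (by positivity : (0:ℝ) ≤ (n:ℝ)+2) (by positivity : (0:ℝ) ≤ (n:ℝ)+1)) (ha (n+2)))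
      (sub_nonneg.mpr hpow)]
  have hQ : HasDerivAt (fun w : ℂ => ∑' k : ℕ, (a (k+2) : ℂ) * ((k+2:ℕ):ℂ) * w ^ (k+1))
      (∑' k : ℕ, (a (k+2) : ℂ) * ((k+2:ℕ):ℂ) * ((k+1:ℕ):ℂ) * z ^ k) z :=
    hasDerivAt_tsum_of_isPreconnected hu2 ht_open ht_conn
      (fun n w _ => hder2 n w) hbound2 h0t
      (summable_zero.congr (fun n => by simp)) hzt
  have hderivf_eq : deriv (deriv f) z
      = -(∑' k : ℕ, (a (k+2) : ℂ) * ((k+2:ℕ):ℂ) * ((k+1:ℕ):ℂ) * z ^ k) := by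
    have hev2 : deriv f =ᶠ[nhds z]
        (fun w => 1 - ∑' k : ℕ, (a (k+2) : ℂ) * ((k+2:ℕ):ℂ) * w ^ (k+1)) :=
      Filter.eventuallyEq_of_mem (ht_open.mem_nhds hzt) hDf
    rw [hev2.deriv_eq]
    exact ((hasDerivAt_const z (1:ℂ)).sub hQ).deriv.trans (zero_sub _)
  -- key coefficient inequality
  have hkey : ∀ n : ℕ, (A-B) * (((n:ℝ)+2) * (((n:ℝ)+2) - ψ) * a (n+2) * ‖z‖ ^ (n+1))
      ≤ (1-ψ) * (mu q A B α m l (n+2) * a (n+2)) := by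
    intro n
    have hr := hrad (n+2) (by omega)
    rw [show n+2-1 = n+1 from rfl] at hr
    push_cast at hr
    have hn0 : (0:ℝ) ≤ (n:ℝ) := Nat.cast_nonneg n
    have hpos : 0 < ((n:ℝ)+2) * (((n:ℝ)+2) - ψ) * (A-B) :=
      mul_pos (mul_pos (by positivity) (by linarith)) hAB
    rw [le_div_iff₀ hpos] at hr
    nlinarith [mul_le_mul_of_nonneg_right hr (ha (n+2))]
  have hSψnn : ∀ n : ℕ, 0 ≤ ((n:ℝ)+2) * (((n:ℝ)+2) - ψ) * a (n+2) * ‖z‖ ^ (n+1) := by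
    intro n
    have hn0 : (0:ℝ) ≤ (n:ℝ) := Nat.cast_nonneg n
    have h1 : (0:ℝ) ≤ ((n:ℝ)+2) - ψ := by linarith
    have := ha (n+2)
    positivity
  have hSψsum : Summable (fun n : ℕ => ((n:ℝ)+2) * (((n:ℝ)+2) - ψ) * a (n+2) * ‖z‖ ^ (n+1)) := by
    apply Summable.of_nonneg_of_le hSψnn _ ((hsummable.mul_left (1-ψ)).div_const (A-B))
    intro n
    rw [le_div_iff₀ hAB]
    nlinarith [hkey n]
  have hTψ : ∑' n : ℕ, ((n:ℝ)+2) * (((n:ℝ)+2) - ψ) * a (n+2) * ‖z‖ ^ (n+1) ≤ 1 - ψ := by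
    have h1 : (A-B) * ∑' n : ℕ, ((n:ℝ)+2) * (((n:ℝ)+2) - ψ) * a (n+2) * ‖z‖ ^ (n+1)
        ≤ (1-ψ) * (A-B) := by
      rw [← tsum_mul_left]
      calc ∑' n : ℕ, (A-B) * (((n:ℝ)+2) * (((n:ℝ)+2) - ψ) * a (n+2) * ‖z‖ ^ (n+1))
          ≤ ∑' n : ℕ, (1-ψ) * (mu q A B α m l (n+2) * a (n+2)) :=
            Summable.tsum_le_tsum hkey (hSψsum.mul_left _) (hsummable.mul_left _)
        _ = (1-ψ) * ∑' n : ℕ, mu q A B α m l (n+2) * a (n+2) := tsum_mul_left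
        _ ≤ (1-ψ) * (A-B) := mul_le_mul_of_nonneg_left hsum (by linarith)
    nlinarith [h1]
  -- first/second derivative coefficient sums
  have hn1le : ∀ n : ℕ, ((n:ℝ)+2) * a (n+2) * ‖z‖ ^ (n+1)
      ≤ ((n:ℝ)+2) * (((n:ℝ)+2) - ψ) * a (n+2) * ‖z‖ ^ (n+1) := by
    intro n
    have hn0 : (0:ℝ) ≤ (n:ℝ) := Nat.cast_nonneg n
    nlinarith [mul_nonneg (mul_nonneg (mul_nonneg (by positivity : (0:ℝ) ≤ (n:ℝ)+2)
      (ha (n+2))) (pow_nonneg hr0 (n+1))) (by linarith : (0:ℝ) ≤ (n:ℝ)+1-ψ)]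
  have hn2le : ∀ n : ℕ, ((n:ℝ)+2) * ((n:ℝ)+1) * a (n+2) * ‖z‖ ^ (n+1)
      ≤ ((n:ℝ)+2) * (((n:ℝ)+2) - ψ) * a (n+2) * ‖z‖ ^ (n+1) := by
    intro n
    nlinarith [mul_nonneg (mul_nonneg (mul_nonneg (by positivity : (0:ℝ) ≤ (n:ℝ)+2)
      (ha (n+2))) (pow_nonneg hr0 (n+1))) (by linarith : (0:ℝ) ≤ 1-ψ)]
  have hn1nn : ∀ n : ℕ, (0:ℝ) ≤ ((n:ℝ)+2) * a (n+2) * ‖z‖ ^ (n+1) := by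
    intro n; have := ha (n+2); positivity
  have hn2nn : ∀ n : ℕ, (0:ℝ) ≤ ((n:ℝ)+2) * ((n:ℝ)+1) * a (n+2) * ‖z‖ ^ (n+1) := by
    intro n; have := ha (n+2); positivity
  have hn1sum : Summable (fun n : ℕ => ((n:ℝ)+2) * a (n+2) * ‖z‖ ^ (n+1)) :=
    Summable.of_nonneg_of_le hn1nn hn1le hSψsum
  have hn2sum : Summable (fun n : ℕ => ((n:ℝ)+2) * ((n:ℝ)+1) * a (n+2) * ‖z‖ ^ (n+1)) :=
    Summable.of_nonneg_of_le hn2nn hn2le hSψsum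
  have hT1a : (2-ψ) * ∑' n : ℕ, ((n:ℝ)+2) * a (n+2) * ‖z‖ ^ (n+1) ≤ 1 - ψ := by
    have hpt : ∀ n : ℕ, (2-ψ) * (((n:ℝ)+2) * a (n+2) * ‖z‖ ^ (n+1))
        ≤ ((n:ℝ)+2) * (((n:ℝ)+2) - ψ) * a (n+2) * ‖z‖ ^ (n+1) := by
      intro n
      have hn0 : (0:ℝ) ≤ (n:ℝ) := Nat.cast_nonneg n
      have hkey2 : (0:ℝ) ≤ ((n:ℝ)+2) * a (n+2) * ‖z‖ ^ (n+1) * (n:ℝ) :=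
        mul_nonneg (mul_nonneg (mul_nonneg (by positivity) (ha (n+2)))
          (pow_nonneg hr0 (n+1))) hn0
      linarith [hkey2]
    rw [← tsum_mul_left]
    exact le_trans (Summable.tsum_le_tsum hpt (hn1sum.mul_left _) hSψsum) hTψ
  have hT1nn : 0 ≤ ∑' n : ℕ, ((n:ℝ)+2) * a (n+2) * ‖z‖ ^ (n+1) := tsum_nonneg hn1nn
  have hT1lt : ∑' n : ℕ, ((n:ℝ)+2) * a (n+2) * ‖z‖ ^ (n+1) < 1 := by
    by_contra hcon
    push_neg at hcon
    have h2 := mul_le_mul_of_nonneg_left hcon (by linarith : (0:ℝ) ≤ 2-ψ)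
    rw [mul_one] at h2
    linarith [hT1a, h2]
  have hT1U : (∑' n : ℕ, ((n:ℝ)+2) * ((n:ℝ)+1) * a (n+2) * ‖z‖ ^ (n+1))
      + (1-ψ) * ∑' n : ℕ, ((n:ℝ)+2) * a (n+2) * ‖z‖ ^ (n+1) ≤ 1 - ψ := by
    rw [← tsum_mul_left, ← Summable.tsum_add hn2sum (hn1sum.mul_left _)]
    refine le_trans (le_of_eq (tsum_congr (fun n => ?_))) hTψ
    ring
  -- norms of the complex sums
  have hnorm1 : ∀ n : ℕ, ‖(a (n+2) : ℂ) * ((n+2:ℕ):ℂ) * z ^ (n+1)‖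
      = ((n:ℝ)+2) * a (n+2) * ‖z‖ ^ (n+1) := by
    intro n
    rw [norm_mul, norm_mul, norm_pow, Complex.norm_natCast, Complex.norm_real,
      Real.norm_eq_abs, abs_of_nonneg (ha _)]
    push_cast
    ring
  have hnorm2 : ∀ n : ℕ, ‖z * ((a (n+2) : ℂ) * ((n+2:ℕ):ℂ) * ((n+1:ℕ):ℂ) * z ^ n)‖
      = ((n:ℝ)+2) * ((n:ℝ)+1) * a (n+2) * ‖z‖ ^ (n+1) := by
    intro n
    rw [norm_mul, norm_mul, norm_mul, norm_mul, norm_pow, Complex.norm_natCast,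
      Complex.norm_natCast, Complex.norm_real, Real.norm_eq_abs, abs_of_nonneg (ha _)]
    push_cast
    ring
  have hS1 : ‖∑' k : ℕ, (a (k+2) : ℂ) * ((k+2:ℕ):ℂ) * z ^ (k+1)‖
      ≤ ∑' n : ℕ, ((n:ℝ)+2) * a (n+2) * ‖z‖ ^ (n+1) := by
    have hsn : Summable (fun n : ℕ => ‖(a (n+2) : ℂ) * ((n+2:ℕ):ℂ) * z ^ (n+1)‖) :=
      hn1sum.congr (fun n => (hnorm1 n).symm)
    calc ‖∑' k : ℕ, (a (k+2) : ℂ) * ((k+2:ℕ):ℂ) * z ^ (k+1)‖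
        ≤ ∑' n : ℕ, ‖(a (n+2) : ℂ) * ((n+2:ℕ):ℂ) * z ^ (n+1)‖ := norm_tsum_le_tsum_norm hsn
      _ = ∑' n : ℕ, ((n:ℝ)+2) * a (n+2) * ‖z‖ ^ (n+1) := tsum_congr hnorm1
  have hzS2 : ‖z * ∑' k : ℕ, (a (k+2) : ℂ) * ((k+2:ℕ):ℂ) * ((k+1:ℕ):ℂ) * z ^ k‖
      ≤ ∑' n : ℕ, ((n:ℝ)+2) * ((n:ℝ)+1) * a (n+2) * ‖z‖ ^ (n+1) := by
    have hmul : z * ∑' k : ℕ, (a (k+2) : ℂ) * ((k+2:ℕ):ℂ) * ((k+1:ℕ):ℂ) * z ^ k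
        = ∑' k : ℕ, z * ((a (k+2) : ℂ) * ((k+2:ℕ):ℂ) * ((k+1:ℕ):ℂ) * z ^ k) :=
      tsum_mul_left.symm
    rw [hmul]
    have hsn : Summable
        (fun n : ℕ => ‖z * ((a (n+2) : ℂ) * ((n+2:ℕ):ℂ) * ((n+1:ℕ):ℂ) * z ^ n)‖) :=
      hn2sum.congr (fun n => (hnorm2 n).symm)
    calc ‖∑' k : ℕ, z * ((a (k+2) : ℂ) * ((k+2:ℕ):ℂ) * ((k+1:ℕ):ℂ) * z ^ k)‖
        ≤ ∑' n : ℕ, ‖z * ((a (n+2) : ℂ) * ((n+2:ℕ):ℂ) * ((n+1:ℕ):ℂ) * z ^ n)‖ :=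
          norm_tsum_le_tsum_norm hsn
      _ = ∑' n : ℕ, ((n:ℝ)+2) * ((n:ℝ)+1) * a (n+2) * ‖z‖ ^ (n+1) := tsum_congr hnorm2
  have hS1lt : ‖∑' k : ℕ, (a (k+2) : ℂ) * ((k+2:ℕ):ℂ) * z ^ (k+1)‖ < 1 :=
    lt_of_le_of_lt hS1 hT1lt
  have hne : (1:ℂ) - ∑' k : ℕ, (a (k+2) : ℂ) * ((k+2:ℕ):ℂ) * z ^ (k+1) ≠ 0 := by
    intro h
    rw [sub_eq_zero] at h
    rw [← h, norm_one] at hS1lt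
    exact lt_irrefl _ hS1lt
  have hDfz : deriv f z = 1 - ∑' k : ℕ, (a (k+2) : ℂ) * ((k+2:ℕ):ℂ) * z ^ (k+1) := hDf z hzt
  have hlow : 1 - (∑' n : ℕ, ((n:ℝ)+2) * a (n+2) * ‖z‖ ^ (n+1))
      ≤ ‖(1:ℂ) - ∑' k : ℕ, (a (k+2) : ℂ) * ((k+2:ℕ):ℂ) * z ^ (k+1)‖ := by
    have h := norm_sub_norm_le (1:ℂ) (∑' k : ℕ, (a (k+2) : ℂ) * ((k+2:ℕ):ℂ) * z ^ (k+1))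
    rw [norm_one] at h
    linarith [hS1]
  have hpos : 0 < ‖(1:ℂ) - ∑' k : ℕ, (a (k+2) : ℂ) * ((k+2:ℕ):ℂ) * z ^ (k+1)‖ := by
    linarith [hT1lt]
  constructor
  · rw [hDfz]; exact hne
  · rw [hDfz, hderivf_eq, norm_div, div_le_iff₀ hpos, mul_neg, norm_neg]
    calc ‖z * ∑' k : ℕ, (a (k+2) : ℂ) * ((k+2:ℕ):ℂ) * ((k+1:ℕ):ℂ) * z ^ k‖
        ≤ ∑' n : ℕ, ((n:ℝ)+2) * ((n:ℝ)+1) * a (n+2) * ‖z‖ ^ (n+1) := hzS2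
      _ ≤ (1-ψ) * (1 - ∑' n : ℕ, ((n:ℝ)+2) * a (n+2) * ‖z‖ ^ (n+1)) := by nlinarith [hT1U]
      _ ≤ (1-ψ) * ‖(1:ℂ) - ∑' k : ℕ, (a (k+2) : ℂ) * ((k+2:ℕ):ℂ) * z ^ (k+1)‖ :=
          mul_le_mul_of_nonneg_left hlow (by linarith)
end

section
/- Let q ∈ (0,1), let A, B be reals with −1 ≤ B < A ≤ 1, let α ≥ 0 be real, and let m > l ≥ 0 be integers, and set μ(k) = (1 + α(1 + |B|))·(([m+1]_q)_{k−1} − ([l+1]_q)_{k−1}) + |B·([m+1]_q)_{k−1} − A·([l+1]_q)_{k−1}| for k ≥ 2. Let (a_k)_{k≥2} be nonnegative reals. Then ∑_{k≥2} μ(k)·a_k ≤ A − B holds if and only if there exists a sequence (η_k)_{k≥1} of nonnegative reals with ∑_{k≥1} η_k = 1 such that a_k = η_k·(A − B)/μ(k) for every k ≥ 2. (Equivalently, f(z) = z − ∑_{k≥2} a_k z^k lies in the class if and only if f = ∑_{k≥1} η_k f_k with f_1(z) = z and f_k(z) = z − ((A − B)/μ(k))·z^k for k ≥ 2.) -/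
lemma qNum_pos {q : ℝ} (hq0 : 0 < q) (hq1 : q < 1) {x : ℝ} (hx : 0 < x) :
    0 < qNum q x := by
  unfold qNum
  apply div_pos
  · have : q ^ x < 1 := Real.rpow_lt_one hq0.le hq1 hx
    linarith
  · linarith

lemma qNum_lt {q : ℝ} (hq0 : 0 < q) (hq1 : q < 1) {x y : ℝ} (hxy : x < y) :
    qNum q x < qNum q y := by
  unfold qNum
  have h := Real.rpow_lt_rpow_of_exponent_gt hq0 hq1 hxy
  have h1 : (0:ℝ) < 1 - q := by linarith
  rw [div_lt_div_iff₀ h1 h1]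
  nlinarith

lemma qPoch_pos {q : ℝ} (hq0 : 0 < q) (hq1 : q < 1) {x : ℝ} (hx : 0 < x) (n : ℕ) :
    0 < qPoch q x n := by
  unfold qPoch
  apply Finset.prod_pos
  intro j _
  have : (0:ℝ) ≤ j := Nat.cast_nonneg j
  exact qNum_pos hq0 hq1 (by linarith)

lemma qPoch_lt {q : ℝ} (hq0 : 0 < q) (hq1 : q < 1) {x y : ℝ} (hx : 0 < x) (hxy : x < y)
    {n : ℕ} (hn : 1 ≤ n) : qPoch q x n < qPoch q y n := by
  unfold qPoch
  apply Finset.prod_lt_prod_of_nonempty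
  · intro j _
    have : (0:ℝ) ≤ j := Nat.cast_nonneg j
    exact qNum_pos hq0 hq1 (by linarith)
  · intro j _
    exact qNum_lt hq0 hq1 (by linarith)
  · exact ⟨0, Finset.mem_range.mpr hn⟩

lemma mu_pos {q A B α : ℝ} (hq0 : 0 < q) (hq1 : q < 1) (hα : 0 ≤ α)
    {m l : ℕ} (hml : l < m) {k : ℕ} (hk : 2 ≤ k) :
    0 < mu q A B α m l k := by
  unfold mu
  have h1 : (0:ℝ) < (l:ℝ) + 1 := by positivity
  have h2 : ((l:ℝ) + 1) < (m:ℝ) + 1 := by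
    have : (l:ℝ) < m := by exact_mod_cast hml
    linarith
  have hn : 1 ≤ k - 1 := by omega
  have hP := qPoch_lt hq0 hq1 h1 h2 hn
  have hcoef : (0:ℝ) < 1 + α * (1 + |B|) := by positivity
  have habs : 0 ≤ |B * qPoch q ((m : ℝ) + 1) (k - 1) - A * qPoch q ((l : ℝ) + 1) (k - 1)| :=
    abs_nonneg _
  nlinarith

/-- Theorem 5.1 (extreme points): the coefficient condition holds iff the coefficients arise
from a convex combination of the extreme points `f₁(z) = z` and
`f_k(z) = z - ((A-B)/μ(k)) z^k`, i.e. `a_k = η_k (A-B)/μ(k)` with `η_k ≥ 0`, `∑_{k≥1} η_k = 1`. -/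
theorem extreme_points
    (q A B α : ℝ) (hq : q ∈ Set.Ioo (0 : ℝ) 1)
    (hB : -1 ≤ B) (hBA : B < A) (hA : A ≤ 1) (hα : 0 ≤ α)
    (m l : ℕ) (hml : l < m)
    (a : ℕ → ℝ) (ha : ∀ k, 0 ≤ a k) :
    (Summable (fun k : ℕ => mu q A B α m l (k + 2) * a (k + 2)) ∧
      ∑' k : ℕ, mu q A B α m l (k + 2) * a (k + 2) ≤ A - B) ↔
    (∃ η : ℕ → ℝ, (∀ k, 1 ≤ k → 0 ≤ η k) ∧
      Summable (fun k : ℕ => η (k + 1)) ∧ (∑' k : ℕ, η (k + 1)) = 1 ∧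
      ∀ k, 2 ≤ k → a k = η k * (A - B) / mu q A B α m l k) := by
  obtain ⟨hq0, hq1⟩ := hq
  have hAB : (0:ℝ) < A - B := by linarith
  have hμ : ∀ k : ℕ, 2 ≤ k → 0 < mu q A B α m l k := fun k hk => mu_pos hq0 hq1 hα hml hk
  constructor
  · rintro ⟨hS, hle⟩
    set T := ∑' k : ℕ, mu q A B α m l (k + 2) * a (k + 2) with hT
    refine ⟨fun k => match k with
      | 0 => 0
      | 1 => 1 - T / (A - B)
      | (j+2) => mu q A B α m l (j+2) * a (j+2) / (A - B), ?_, ?_, ?_, ?_⟩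
    · intro k hk
      match k with
      | 1 =>
        have hT1 : T / (A - B) ≤ 1 := (div_le_one hAB).mpr hle
        simp only
        linarith
      | (j+2) =>
        exact div_nonneg (mul_nonneg (hμ _ (by omega)).le (ha _)) hAB.le
    · have h2 : Summable (fun n : ℕ => mu q A B α m l (n+2) * a (n+2) / (A - B)) :=
        hS.div_const _
      exact (summable_nat_add_iff 1).mp h2
    · have hsumm : Summable (fun n : ℕ => mu q A B α m l (n+2) * a (n+2) / (A - B)) :=
        hS.div_const _
      have hsumm' : Summable (fun k : ℕ =>
          (fun k => match k with
            | 0 => (0:ℝ)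
            | 1 => 1 - T / (A - B)
            | (j+2) => mu q A B α m l (j+2) * a (j+2) / (A - B)) (k + 1)) :=
        (summable_nat_add_iff 1).mp hsumm
      rw [Summable.tsum_eq_zero_add hsumm']
      show (1 - T / (A - B)) + (∑' n : ℕ, mu q A B α m l (n+2) * a (n+2) / (A - B)) = 1
      rw [tsum_div_const]
      field_simp
      rw [← hT]; ring
    · intro k hk
      obtain ⟨j, rfl⟩ : ∃ j, k = j + 2 := ⟨k - 2, by omega⟩
      show a (j+2) = mu q A B α m l (j+2) * a (j+2) / (A - B) * (A - B) / mu q A B α m l (j+2)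
      have hμ' := (hμ (j+2) (by omega)).ne'
      field_simp
  · rintro ⟨η, hη, hηs, hηsum, hak⟩
    have hkey : ∀ k : ℕ, mu q A B α m l (k+2) * a (k+2) = η (k+2) * (A - B) := by
      intro k
      rw [hak (k+2) (by omega)]
      have hμ' := (hμ (k+2) (by omega)).ne'
      field_simp
    have htail : Summable (fun k : ℕ => η (k+2)) := (summable_nat_add_iff 1).mpr hηs
    have hfun : (fun k : ℕ => mu q A B α m l (k+2) * a (k+2)) =
        fun k : ℕ => η (k+2) * (A - B) := funext hkey
    have hS : Summable (fun k : ℕ => mu q A B α m l (k+2) * a (k+2)) := by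
      rw [hfun]; exact htail.mul_right _
    refine ⟨hS, ?_⟩
    have h1 : η 1 + ∑' k : ℕ, η (k+2) = 1 := by
      rw [← hηsum, Summable.tsum_eq_zero_add hηs]
    have hη1 : 0 ≤ η 1 := hη 1 le_rfl
    calc ∑' k : ℕ, mu q A B α m l (k+2) * a (k+2)
        = (∑' k : ℕ, η (k+2)) * (A - B) := by rw [hfun, tsum_mul_right]
      _ ≤ 1 * (A - B) := by
          apply mul_le_mul_of_nonneg_right _ hAB.le
          linarith
      _ = A - B := one_mul _
end

section
/- Let q ∈ (0,1) and let m ≥ 1 be an integer. For a function g on the punctured unit disk define the q-difference operator (D_q g)(z) = (g(qz) − g(z))/((q − 1)·z). Let f(z) = z + ∑_{k≥2} a_k z^k be analytic on the open unit disk E and define D_q^m f(z) = z + ∑_{k≥2} (([m+1]_q)_{k−1}/[k−1]_q!)·a_k·z^k. Then for every z ∈ E with z ≠ 0, D_q^m f(z) = (z/[m]_q!)·(D_q iterated m times applied to the function w ↦ w^{m−1}·f(w))(z). -/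
/-- The q-difference operator `(D_q g)(z) = (g(qz) - g(z)) / ((q-1) z)`. -/
noncomputable def Dqop (q : ℝ) (g : ℂ → ℂ) : ℂ → ℂ :=
  fun z => (g ((q : ℂ) * z) - g z) / (((q : ℂ) - 1) * z)



lemma qNum_nonneg {q : ℝ} (hq0 : 0 < q) (hq1 : q < 1) {x : ℝ} (hx : 0 ≤ x) : 0 ≤ qNum q x := by
  unfold qNum
  have h1 : q ^ x ≤ 1 := Real.rpow_le_one hq0.le hq1.le hx
  exact div_nonneg (by linarith) (by linarith)

lemma qNum_le {q : ℝ} (hq0 : 0 < q) (hq1 : q < 1) {x : ℝ} : qNum q x ≤ 1 / (1 - q) := by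
  unfold qNum
  have h1 : 0 < q ^ x := Real.rpow_pos_of_pos hq0 x
  apply div_le_div_of_nonneg_right (by linarith) (by linarith) |>.trans_eq rfl

lemma qFact_pos {q : ℝ} (hq0 : 0 < q) (hq1 : q < 1) (n : ℕ) : 0 < qFact q n := by
  unfold qFact
  exact Finset.prod_pos fun j _ => qNum_pos hq0 hq1 (by positivity)

lemma qNum_mul_cast {q : ℝ} (hq1 : q < 1) (n : ℕ) :
    ((qNum q n : ℝ) : ℂ) * ((q : ℂ) - 1) = (q : ℂ) ^ n - 1 := by
  have h : qNum q n = (1 - q ^ n) / (1 - q) := by rw [qNum, Real.rpow_natCast]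
  have h1 : (1 : ℂ) - q ≠ 0 := by
    intro hc
    have : (q : ℂ) = 1 := by linear_combination -hc
    rw [show (1:ℂ) = ((1:ℝ):ℂ) by norm_num, Complex.ofReal_inj] at this
    linarith
  rw [h]
  push_cast
  rw [div_mul_eq_mul_div, div_eq_iff h1]
  ring

lemma prod_desc_eq_qFact (q : ℝ) (m : ℕ) :
    ∏ i ∈ Finset.range m, qNum q ((m : ℝ) - i) = qFact q m := by
  rw [qFact, ← Finset.prod_range_reflect]
  refine Finset.prod_congr rfl fun i hi => ?_
  have hi' : i < m := Finset.mem_range.mp hi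
  congr 1
  push_cast [Nat.cast_sub (by omega : i ≤ m - 1), Nat.cast_sub (by omega : 1 ≤ m)]
  ring

lemma prod_desc_eq_asc (q : ℝ) (m k : ℕ) :
    ∏ i ∈ Finset.range m, qNum q ((k : ℝ) + m + 1 - i) =
      ∏ i ∈ Finset.range m, qNum q ((k : ℝ) + 2 + i) := by
  rw [← Finset.prod_range_reflect]
  refine Finset.prod_congr rfl fun i hi => ?_
  have hi' : i < m := Finset.mem_range.mp hi
  congr 1
  push_cast [Nat.cast_sub (by omega : i ≤ m - 1), Nat.cast_sub (by omega : 1 ≤ m)]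
  ring

lemma qFact_add (q : ℝ) (a b : ℕ) :
    qFact q (a + b) = qFact q a * ∏ i ∈ Finset.range b, qNum q ((a : ℝ) + 1 + i) := by
  rw [qFact, Finset.prod_range_add, ← qFact]
  congr 1
  refine Finset.prod_congr rfl fun i _ => ?_
  congr 1
  push_cast
  ring

lemma binom_identity (q : ℝ) (m k : ℕ) :
    (∏ i ∈ Finset.range m, qNum q ((k : ℝ) + 2 + i)) * qFact q (k + 1) =
      qPoch q ((m : ℝ) + 1) (k + 1) * qFact q m := by
  have h1 := qFact_add q m (k + 1)
  have h2 := qFact_add q (k + 1) m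
  have h3 : qPoch q ((m : ℝ) + 1) (k + 1) = ∏ i ∈ Finset.range (k + 1), qNum q ((m : ℝ) + 1 + i) := by
    rw [qPoch]
  have h4 : (∏ i ∈ Finset.range m, qNum q ((k : ℝ) + 2 + i)) =
      ∏ i ∈ Finset.range m, qNum q (((k + 1 : ℕ) : ℝ) + 1 + i) := by
    refine Finset.prod_congr rfl fun i _ => ?_
    congr 1
    push_cast
    ring
  rw [h3, h4]
  calc (∏ i ∈ Finset.range m, qNum q (((k + 1 : ℕ) : ℝ) + 1 + i)) * qFact q (k + 1)
      = qFact q (k + 1 + m) := by rw [h2]; ring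
    _ = qFact q (m + (k + 1)) := by rw [show k + 1 + m = m + (k + 1) from by omega]
    _ = _ := by rw [h1]; ring


lemma prod_bound {q : ℝ} (hq0 : 0 < q) (hq1 : q < 1) (m j k : ℕ) (hj : j ≤ m) :
    |∏ i ∈ Finset.range j, qNum q ((k : ℝ) + m + 1 - i)| ≤ (1 / (1 - q)) ^ j := by
  rw [Finset.abs_prod]
  calc ∏ i ∈ Finset.range j, |qNum q ((k : ℝ) + m + 1 - i)|
      ≤ ∏ _i ∈ Finset.range j, (1 / (1 - q)) := ?_
    _ = (1 / (1 - q)) ^ j := by simp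
  refine Finset.prod_le_prod (fun i _ => abs_nonneg _) fun i hi => ?_
  have hi' : i < j := Finset.mem_range.mp hi
  have harg : (0 : ℝ) ≤ (k : ℝ) + m + 1 - i := by
    have : (i : ℝ) ≤ m := by exact_mod_cast Nat.cast_le.mpr (by omega)
    linarith
  rw [abs_of_nonneg (qNum_nonneg hq0 hq1 harg)]
  exact qNum_le hq0 hq1

lemma summ_aux {q : ℝ} (hq0 : 0 < q) (hq1 : q < 1) (a : ℕ → ℂ) (z : ℂ)
    (hz : ‖z‖ < 1) (hz0 : z ≠ 0)
    (hs : Summable fun k : ℕ => ‖a (k + 2)‖ * ‖z‖ ^ (k + 2))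
    (c : ℕ → ℝ) (C : ℝ) (hc : ∀ k, |c k| ≤ C) (d : ℕ) (hd : 1 ≤ d) :
    Summable fun k : ℕ => ((c k : ℝ) : ℂ) * a (k + 2) * z ^ (k + d) := by
  have hznorm : 0 < ‖z‖ := norm_pos_iff.mpr hz0
  have hC : 0 ≤ C := (abs_nonneg _).trans (hc 0)
  apply Summable.of_norm
  refine Summable.of_nonneg_of_le (fun k => norm_nonneg _) ?_ (hs.mul_left (C / ‖z‖))
  intro k
  have h1 : ‖z‖ ^ (k + d) ≤ ‖z‖ ^ (k + 1) :=
    pow_le_pow_of_le_one (norm_nonneg z) hz.le (by omega)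
  have h2 : ‖((c k : ℝ) : ℂ) * a (k + 2) * z ^ (k + d)‖ = |c k| * ‖a (k + 2)‖ * ‖z‖ ^ (k + d) := by
    simp [norm_mul, Complex.norm_real, Real.norm_eq_abs, norm_pow]
  rw [h2]
  have h3 : |c k| * ‖a (k + 2)‖ * ‖z‖ ^ (k + d) ≤ C * ‖a (k + 2)‖ * ‖z‖ ^ (k + 1) := by
    apply mul_le_mul (mul_le_mul_of_nonneg_right (hc k) (norm_nonneg _)) h1 (by positivity) (by positivity)
  refine h3.trans_eq ?_
  have : ‖z‖ ^ (k + 2) = ‖z‖ ^ (k + 1) * ‖z‖ := by rw [← pow_succ]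
  rw [this, div_mul_eq_mul_div, eq_div_iff hznorm.ne']
  ring

lemma term_div {q : ℝ} (hq1 : q < 1) (z : ℂ) (hz0 : z ≠ 0) (c : ℂ) (e : ℕ) (he : 1 ≤ e) :
    c * (((q : ℂ) * z) ^ e - z ^ e) / (((q : ℂ) - 1) * z) =
      ((qNum q e : ℝ) : ℂ) * c * z ^ (e - 1) := by
  have hq : (q : ℂ) - 1 ≠ 0 := by
    intro hcon
    have : (q : ℂ) = 1 := by linear_combination hcon
    rw [show (1:ℂ) = ((1:ℝ):ℂ) by norm_num, Complex.ofReal_inj] at this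
    linarith
  have hz : z ^ e = z ^ (e - 1) * z := by
    rw [← pow_succ]
    congr 1
    omega
  have hnum := qNum_mul_cast hq1 e
  rw [mul_pow, div_eq_iff (mul_ne_zero hq hz0), hz]
  linear_combination -c * z ^ (e - 1) * z * hnum

lemma iter_formula (q : ℝ) (hq0 : 0 < q) (hq1 : q < 1) (m : ℕ) (hm : 1 ≤ m)
    (a : ℕ → ℂ) (f : ℂ → ℂ)
    (hconv : ∀ z ∈ {z : ℂ | ‖z‖ < 1}, Summable (fun k : ℕ => ‖a (k + 2)‖ * ‖z‖ ^ (k + 2)))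
    (hfa : ∀ z ∈ {z : ℂ | ‖z‖ < 1}, f z = z + ∑' k : ℕ, a (k + 2) * z ^ (k + 2)) :
    ∀ j, j ≤ m → ∀ z : ℂ, ‖z‖ < 1 → z ≠ 0 →
      (Dqop q)^[j] (fun w : ℂ => w ^ (m - 1) * f w) z =
        ((∏ i ∈ Finset.range j, qNum q ((m : ℝ) - i) : ℝ) : ℂ) * z ^ (m - j) +
          ∑' k : ℕ, ((∏ i ∈ Finset.range j, qNum q ((k : ℝ) + m + 1 - i) : ℝ) : ℂ) *
            a (k + 2) * z ^ (k + (m + 1 - j)) := by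
  intro j
  induction j with
  | zero =>
    intro _ z hz hz0
    simp only [Function.iterate_zero, id_eq, Finset.range_zero, Finset.prod_empty,
      Complex.ofReal_one, one_mul, Nat.sub_zero]
    rw [hfa z hz, mul_add, ← tsum_mul_left]
    congr 1
    · rw [← pow_succ]
      congr 1
      omega
    · exact tsum_congr fun k => by
        rw [show k + (m + 1) = (m - 1) + (k + 2) from by omega, pow_add]
        ring
  | succ j ih =>
    intro hj z hz hz0
    have hjm : j < m := by omega
    have hq0' : (q : ℂ) ≠ 0 := Complex.ofReal_ne_zero.mpr hq0.ne'
    have hqz0 : (q : ℂ) * z ≠ 0 := mul_ne_zero hq0' hz0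
    have hqznorm : ‖(q : ℂ) * z‖ < 1 := by
      rw [norm_mul, Complex.norm_real, Real.norm_eq_abs, abs_of_pos hq0]
      nlinarith [norm_nonneg z]
    have h1 := ih hjm.le ((q : ℂ) * z) hqznorm hqz0
    have h2 := ih hjm.le z hz hz0
    rw [Function.iterate_succ_apply']
    show ((Dqop q)^[j] (fun w : ℂ => w ^ (m - 1) * f w) ((q : ℂ) * z) -
        (Dqop q)^[j] (fun w : ℂ => w ^ (m - 1) * f w) z) / (((q : ℂ) - 1) * z) = _
    rw [h1, h2]
    have hB : ∀ k : ℕ, |∏ i ∈ Finset.range j, qNum q ((k : ℝ) + m + 1 - i)| ≤ (1 / (1 - q)) ^ j :=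
      fun k => prod_bound hq0 hq1 m j k hjm.le
    have hs1 : Summable fun k : ℕ =>
        ((∏ i ∈ Finset.range j, qNum q ((k : ℝ) + m + 1 - i) : ℝ) : ℂ) * a (k + 2) *
          ((q : ℂ) * z) ^ (k + (m + 1 - j)) :=
      summ_aux hq0 hq1 a _ hqznorm hqz0 (hconv _ hqznorm) _ _ hB _ (by omega)
    have hs2 : Summable fun k : ℕ =>
        ((∏ i ∈ Finset.range j, qNum q ((k : ℝ) + m + 1 - i) : ℝ) : ℂ) * a (k + 2) *
          z ^ (k + (m + 1 - j)) :=
      summ_aux hq0 hq1 a _ hz hz0 (hconv _ hz) _ _ hB _ (by omega)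
    rw [add_sub_add_comm, ← Summable.tsum_sub hs1 hs2, add_div, ← tsum_div_const]
    congr 1
    · -- polynomial part
      rw [show ((∏ i ∈ Finset.range j, qNum q ((m : ℝ) - i) : ℝ) : ℂ) * ((q : ℂ) * z) ^ (m - j) -
            ((∏ i ∈ Finset.range j, qNum q ((m : ℝ) - i) : ℝ) : ℂ) * z ^ (m - j) =
          ((∏ i ∈ Finset.range j, qNum q ((m : ℝ) - i) : ℝ) : ℂ) *
            (((q : ℂ) * z) ^ (m - j) - z ^ (m - j)) from by ring]
      rw [term_div hq1 z hz0 _ (m - j) (by omega)]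
      rw [Finset.prod_range_succ]
      push_cast [Nat.cast_sub hjm.le]
      rw [show m - j - 1 = m - (j + 1) from by omega]
      ring
    · refine tsum_congr fun k => ?_
      rw [show ((∏ i ∈ Finset.range j, qNum q ((k : ℝ) + m + 1 - i) : ℝ) : ℂ) * a (k + 2) *
            ((q : ℂ) * z) ^ (k + (m + 1 - j)) -
          ((∏ i ∈ Finset.range j, qNum q ((k : ℝ) + m + 1 - i) : ℝ) : ℂ) * a (k + 2) *
            z ^ (k + (m + 1 - j)) =
          (((∏ i ∈ Finset.range j, qNum q ((k : ℝ) + m + 1 - i) : ℝ) : ℂ) * a (k + 2)) *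
            (((q : ℂ) * z) ^ (k + (m + 1 - j)) - z ^ (k + (m + 1 - j))) from by ring]
      rw [term_div hq1 z hz0 _ (k + (m + 1 - j)) (by omega)]
      rw [Finset.prod_range_succ]
      have hcast : ((k + (m + 1 - j) : ℕ) : ℝ) = (k : ℝ) + m + 1 - j := by
        push_cast [Nat.cast_sub (by omega : j ≤ m + 1)]
        ring
      rw [hcast]
      rw [show k + (m + 1 - j) - 1 = k + (m + 1 - (j + 1)) from by omega]
      push_cast
      ring

/-- Identity (1.6): `D_q^m f(z) = z ∂_q^m (z^{m-1} f(z)) / [m]_q!`. -/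
theorem qRuscheweyh_eq_iterated_q_derivative
    (q : ℝ) (hq : q ∈ Set.Ioo (0 : ℝ) 1) (m : ℕ) (hm : 1 ≤ m)
    (a : ℕ → ℂ) (f : ℂ → ℂ)
    (hanal : AnalyticOnNhd ℂ f {z : ℂ | ‖z‖ < 1})
    (hconv : ∀ z ∈ {z : ℂ | ‖z‖ < 1},
      Summable (fun k : ℕ => ‖a (k + 2)‖ * ‖z‖ ^ (k + 2)))
    (hfa : ∀ z ∈ {z : ℂ | ‖z‖ < 1}, f z = z + ∑' k : ℕ, a (k + 2) * z ^ (k + 2)) :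
    ∀ z ∈ {z : ℂ | ‖z‖ < 1}, z ≠ 0 →
      DqRus q m a z =
        z / ((qFact q m : ℝ) : ℂ) *
          ((Dqop q)^[m] (fun w : ℂ => w ^ (m - 1) * f w)) z := by
  intro z hz hz0
  have hz' : ‖z‖ < 1 := hz
  have hQm : ((qFact q m : ℝ) : ℂ) ≠ 0 :=
    Complex.ofReal_ne_zero.mpr (qFact_pos hq.1 hq.2 m).ne'
  rw [iter_formula q hq.1 hq.2 m hm a f hconv hfa m le_rfl z hz' hz0,
    prod_desc_eq_qFact, DqRus, Nat.sub_self, pow_zero, mul_one,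
    show m + 1 - m = 1 from by omega, mul_add, div_mul_cancel₀ _ hQm, ← tsum_mul_left]
  congr 1
  refine tsum_congr fun k => ?_
  have hr : qPoch q ((m : ℝ) + 1) (k + 1) / qFact q (k + 1) =
      (∏ i ∈ Finset.range m, qNum q ((k : ℝ) + m + 1 - i)) / qFact q m := by
    rw [prod_desc_eq_asc, div_eq_div_iff (qFact_pos hq.1 hq.2 (k + 1)).ne'
      (qFact_pos hq.1 hq.2 m).ne']
    exact (binom_identity q m k).symm
  rw [hr]
  push_cast
  rw [show k + 2 = (k + 1) + 1 from rfl, pow_succ]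
  field_simp
end
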